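/- Let G = F_1^W(K_n) be a 1-fan graph of the complete graph K_n on a set W ⊆ [n] with n ≥ 2, and S the polynomial ring in the vertex variables of G. Then depth(S/I_G) = 1. -/

import Mathlib

open MvPolynomial CategoryTheory

/-- The edge ideal of a simple graph. -/
noncomputable def edgeIdeal (K : Type) [Field K] {V : Type} (G : SimpleGraph V) :
    Ideal (MvPolynomial V K) :=
  Ideal.span {m | ∃ u v, G.Adj u v ∧ m = X u * X v}

/-- The ideal generated by the variables indexed by a set `A`. -/
noncomputable def varIdeal (K : Type) [Field K] {V : Type} (A : Set V) :
    Ideal (MvPolynomial V K) :=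
  Ideal.span ((fun v => (X v : MvPolynomial V K)) '' A)

/-- The edge ideal of the induced subgraph on `A`, inside the big polynomial ring. -/
noncomputable def edgeIdealOn (K : Type) [Field K] {V : Type} (G : SimpleGraph V) (A : Set V) :
    Ideal (MvPolynomial V K) :=
  Ideal.span {m | ∃ u v, G.Adj u v ∧ u ∈ A ∧ v ∈ A ∧ m = X u * X v}

/-- depth of the graded module `S/I` over `S = K[x_v : v ∈ V]`, with respect to the irrelevant
maximal ideal: the least `i` with `Ext^i(K, S/I) ≠ 0`. -/
noncomputable def depthQ (K : Type) [Field K] {V : Type} (I : Ideal (MvPolynomial V K)) : ℕ :=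
  sInf {i : ℕ |
    Nontrivial (((Ext (MvPolynomial V K) (ModuleCat (MvPolynomial V K)) i).obj
        (Opposite.op (ModuleCat.of (MvPolynomial V K)
          (MvPolynomial V K ⧸ varIdeal K (Set.univ : Set V))))).obj
      (ModuleCat.of (MvPolynomial V K) (MvPolynomial V K ⧸ I)))}

/-- The linear map `(v_j) ↦ ∑ v_j · g_j`. -/
noncomputable def combo {S : Type} [CommRing S] {n : ℕ} (g : Fin n → S) :
    (Fin n → S) →ₗ[S] S where
  toFun v := ∑ j, v j * g j
  map_add' u v := by simp [add_mul, Finset.sum_add_distrib]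
  map_smul' c v := by simp [Finset.mul_sum, mul_assoc]

/-- A (finite) graded free resolution of `S/I` over `S = K[x_v : v ∈ V]`:
`0 → F_len → ⋯ → F_1 → F_0 → S/I → 0`, where `F_i = ⊕_j S(-tw i j)` and all maps are
homogeneous of degree `0`. -/
structure GradedFreeResQ (K : Type) [Field K] {V : Type} (I : Ideal (MvPolynomial V K)) where
  rk : ℕ → ℕ
  tw : (i : ℕ) → Fin (rk i) → ℕ
  len : ℕ
  vanish : ∀ i, len < i → rk i = 0
  gen : Fin (rk 0) → MvPolynomial V K
  gen_hom : ∀ j, (gen j).IsHomogeneous (tw 0 j)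
  mat : (i : ℕ) → Matrix (Fin (rk i)) (Fin (rk (i+1))) (MvPolynomial V K)
  mat_hom : ∀ i a b, mat i a b = 0 ∨
    ∃ d, tw (i+1) b = tw i a + d ∧ (mat i a b).IsHomogeneous d
  aug_surj : Function.Surjective
    ((I.mkQ).comp (combo gen))
  exact0 : LinearMap.ker ((I.mkQ).comp (combo gen)) = LinearMap.range (Matrix.toLin' (mat 0))
  exact : ∀ i, LinearMap.ker (Matrix.toLin' (mat i)) =
    LinearMap.range (Matrix.toLin' (mat (i+1)))

/-- Castelnuovo–Mumford regularity of `S/I`: the minimum over all finite graded free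
resolutions of `S/I` of `max_{i,j} (tw i j - i)`. -/
noncomputable def regQ (K : Type) [Field K] {V : Type} (I : Ideal (MvPolynomial V K)) : ℤ :=
  sInf {r : ℤ | ∃ F : GradedFreeResQ K I, ∀ i (j : Fin (F.rk i)), (F.tw i j : ℤ) - i ≤ r}

/-- A (finite) graded free resolution of a homogeneous ideal `I ⊆ S`. -/
structure GradedFreeResId (K : Type) [Field K] {V : Type} (I : Ideal (MvPolynomial V K)) where
  rk : ℕ → ℕ
  tw : (i : ℕ) → Fin (rk i) → ℕ
  len : ℕ
  vanish : ∀ i, len < i → rk i = 0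
  gen : Fin (rk 0) → MvPolynomial V K
  gen_hom : ∀ j, (gen j).IsHomogeneous (tw 0 j)
  gen_span : Ideal.span (Set.range gen) = I
  mat : (i : ℕ) → Matrix (Fin (rk i)) (Fin (rk (i+1))) (MvPolynomial V K)
  mat_hom : ∀ i a b, mat i a b = 0 ∨
    ∃ d, tw (i+1) b = tw i a + d ∧ (mat i a b).IsHomogeneous d
  exact0 : LinearMap.ker (combo gen) = LinearMap.range (Matrix.toLin' (mat 0))
  exact : ∀ i, LinearMap.ker (Matrix.toLin' (mat i)) =
    LinearMap.range (Matrix.toLin' (mat (i+1)))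

/-- Castelnuovo–Mumford regularity of a homogeneous ideal `I`. -/
noncomputable def regId (K : Type) [Field K] {V : Type} (I : Ideal (MvPolynomial V K)) : ℤ :=
  sInf {r : ℤ | ∃ F : GradedFreeResId K I, ∀ i (j : Fin (F.rk i)), (F.tw i j : ℤ) - i ≤ r}

/-- The data defining a `k`-fan graph `F_k^W(K_n)`: the partition `W = W_1 ⊔ ⋯ ⊔ W_k` of a
subset of `[n]` (the block `W i` is enumerated by `w i`, with `r i = |W i|`), and the sizes
`a i j` of the cliques attached along each block. -/
structure FanData (n k : ℕ) where
  r : Fin k → ℕ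
  rpos : ∀ i, 1 ≤ r i
  w : (i : Fin k) → Fin (r i) → Fin n
  winj : Function.Injective (fun p : Σ i : Fin k, Fin (r i) => w p.1 p.2)
  a : (i : Fin k) → (j : Fin (r i)) → ℕ
  agt : ∀ i (j : Fin (r i)), (j : ℕ) + 1 < a i j

/-- `h_{i,j} = a_{i,j} - j` (with `j` 1-indexed) is the number of new vertices of the clique
`K_{a_{i,j}}`. -/
def FanData.h {n k : ℕ} (D : FanData n k) (i : Fin k) (j : Fin (D.r i)) : ℕ :=
  D.a i j - ((j : ℕ) + 1)

/-- The vertex set of the fan graph: the vertices of `K_n` plus the new vertices of all the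
attached cliques. -/
def FanVert {n k : ℕ} (D : FanData n k) : Type :=
  Fin n ⊕ Σ i : Fin k, Σ j : Fin (D.r i), Fin (D.h i j)

/-- Membership in (the vertex set of) the clique `K_{a_{i,j}}`. -/
def FanData.inClique {n k : ℕ} (D : FanData n k) (i : Fin k) (j : Fin (D.r i))
    (x : FanVert D) : Prop :=
  (∃ l : Fin (D.r i), l ≤ j ∧ x = Sum.inl (D.w i l)) ∨ (∃ m, x = Sum.inr ⟨i, j, m⟩)

/-- The fan graph `F_k^W(K_n)`: two distinct vertices are adjacent iff they both lie in `K_n`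
or both lie in one of the attached cliques. -/
def fanGraph {n k : ℕ} (D : FanData n k) : SimpleGraph (FanVert D) where
  Adj u v := u ≠ v ∧ ((∃ x y, u = Sum.inl x ∧ v = Sum.inl y) ∨
    ∃ i j, D.inClique i j u ∧ D.inClique i j v)
  symm := ⟨by
    rintro u v ⟨h1, h2⟩
    refine ⟨Ne.symm h1, ?_⟩
    rcases h2 with ⟨x, y, hx, hy⟩ | ⟨i, j, hu, hv⟩
    exacts [Or.inl ⟨y, x, hy, hx⟩, Or.inr ⟨i, j, hv, hu⟩]⟩
  loopless := ⟨by rintro u ⟨h, -⟩; exact h rfl⟩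

/-- The set `W ⊆ [n]` on which the fans are attached. -/
def FanData.W {n k : ℕ} (D : FanData n k) : Set (Fin n) :=
  Set.range fun p : Σ i : Fin k, Fin (D.r i) => D.w p.1 p.2

/-- `|W| = ∑ᵢ |Wᵢ|`. -/
def FanData.cardW {n k : ℕ} (D : FanData n k) : ℕ := ∑ i, D.r i

/-- Gluing two graphs: delete `A₁ ⊆ V₁` and `A₂ ⊆ V₂` and add a new vertex (`none`) whose
neighbors are those of `g₁` in `G₁` and of `g₂` in `G₂` (among the remaining vertices). -/
def glue {V₁ V₂ : Type} (G₁ : SimpleGraph V₁) (G₂ : SimpleGraph V₂)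
    (A₁ : Set V₁) (g₁ : V₁) (A₂ : Set V₂) (g₂ : V₂) :
    SimpleGraph (Option ({x : V₁ // x ∉ A₁} ⊕ {x : V₂ // x ∉ A₂})) where
  Adj u v := match u, v with
    | some (Sum.inl a), some (Sum.inl b) => G₁.Adj a b
    | some (Sum.inr a), some (Sum.inr b) => G₂.Adj a b
    | none, some (Sum.inl b) => G₁.Adj g₁ b
    | none, some (Sum.inr b) => G₂.Adj g₂ b
    | some (Sum.inl a), none => G₁.Adj g₁ a
    | some (Sum.inr a), none => G₂.Adj g₂ a
    | _, _ => False
  symm := ⟨by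
    rintro (_ | (a | a)) (_ | (b | b)) h <;>
      first | exact h | exact h.symm⟩
  loopless := ⟨by
    rintro (_ | (a | a)) h
    · exact h
    · exact G₁.loopless.irrefl _ h
    · exact G₂.loopless.irrefl _ h⟩

/-- The `∘` operation: remove the leaves `f₁, f₂` and identify their neighbors `v₁, v₂`. -/
def circGlue {V₁ V₂ : Type} (G₁ : SimpleGraph V₁) (G₂ : SimpleGraph V₂)
    (f₁ v₁ : V₁) (f₂ v₂ : V₂) :=
  glue G₁ G₂ {f₁, v₁} v₁ {f₂, v₂} v₂

/-- The `*` operation: identify the leaves `f₁` and `f₂`. -/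
def starGlue {V₁ V₂ : Type} (G₁ : SimpleGraph V₁) (G₂ : SimpleGraph V₂)
    (f₁ : V₁) (f₂ : V₂) :=
  glue G₁ G₂ {f₁} f₁ {f₂} f₂

/-- The clique sum `G ∪_v P₂`: attach a pendant edge (a new leaf `none`) at the vertex `v`. -/
def addPendant {V : Type} (G : SimpleGraph V) (v : V) : SimpleGraph (Option V) where
  Adj u u' := match u, u' with
    | some a, some b => G.Adj a b
    | none, some b => b = v
    | some a, none => a = v
    | none, none => False
  symm := ⟨by rintro (_ | a) (_ | b) h <;> first | exact h | exact h.symm⟩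
  loopless := ⟨by
    rintro (_ | a) h
    · exact h
    · exact G.loopless.irrefl _ h⟩

/-- An induced matching: a set of edges of `G` such that the induced subgraph on its vertices
contains no other edges. -/
def IsInducedMatching {V : Type} (G : SimpleGraph V) (M : Finset (Sym2 V)) : Prop :=
  ↑M ⊆ G.edgeSet ∧
    ∀ e ∈ M, ∀ e' ∈ M, e ≠ e' → ∀ u ∈ e, ∀ v ∈ e', u ≠ v ∧ ¬ G.Adj u v

/-- The induced matching number `ϑ(G)`. -/
noncomputable def indMatchNum {V : Type} (G : SimpleGraph V) : ℕ :=
  sSup {m : ℕ | ∃ M : Finset (Sym2 V), IsInducedMatching G M ∧ M.card = m}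

/-- A graph is chordal if it has no induced cycle of length `≥ 4`. -/
def IsChordal {V : Type} (G : SimpleGraph V) : Prop :=
  ∀ n : ℕ, 4 ≤ n → IsEmpty (SimpleGraph.cycleGraph n ↪g G)

/-- `C` is a vertex cover of `G`. -/
def IsVertexCover {V : Type} (G : SimpleGraph V) (C : Set V) : Prop :=
  ∀ u v, G.Adj u v → u ∈ C ∨ v ∈ C

instance {n k : ℕ} (D : FanData n k) : Fintype (FanVert D) :=
  inferInstanceAs (Fintype (Fin n ⊕ Σ i : Fin k, Σ j : Fin (D.r i), Fin (D.h i j)))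

/-- The last index of the branch on the block `W i`, i.e. the index of `K_{a_{i,r_i}}`. -/
def FanData.lastIdx {n k : ℕ} (D : FanData n k) (i : Fin k) : Fin (D.r i) :=
  ⟨D.r i - 1, Nat.sub_lt (D.rpos i) one_pos⟩

/-- `p = |{(i,j) : h_{i,j} ≥ 2}|`. -/
noncomputable def FanData.p {n k : ℕ} (D : FanData n k) : ℕ :=
  (Finset.univ.filter (fun q : Σ i : Fin k, Fin (D.r i) => 2 ≤ D.h q.1 q.2)).card

/-- `T = max{|W_1|, …, |W_k|}`. -/
def FanData.maxBlock {n k : ℕ} (D : FanData n k) : ℕ := Finset.univ.sup D.r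

/-- `T' = max{|W_{i₀}| - 1, |W_i| (i ≠ i₀)}`. -/
def FanData.maxBlock' {n k : ℕ} (D : FanData n k) (i₀ : Fin k) : ℕ :=
  Finset.univ.sup (Function.update D.r i₀ (D.r i₀ - 1))


/-!
`depth S/I = 1` means `Ext⁰_S(K, S/I) = 0 ≠ Ext¹_S(K, S/I)`. Computing with the resolution
`⋯ → S^(𝔪) → S → S/𝔪 = K`, `Ext⁰` is the socle `0 :_{S/I} 𝔪`, and `Ext¹ ≠ 0` as soon as some
`S`-linear map `𝔪 → S/I` is not multiplication by an element of `S/I`.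

Edge ideals are generated by squarefree quadratic monomials, so `S/I_G` has no socle. In
`F_1^W(K_n)` the vertex `u₁` is adjacent to every other vertex, and then
`f ↦ f(0, …, 0, x_{u₁}, 0, …, 0)` is `S`-linear modulo `I_G`. It is not multiplication by any
`u`: evaluating at `x_{u₁}` and at another variable `x_b` forces `x_{u₁}(1 - u) ∈ I_G` and
`x_b u ∈ I_G`, so the constant term of `u` would be both `1` and `0`.
-/

open Opposite

lemma CategoryTheory.ProjectiveResolution.subsingleton_ext_iff_exactAt {R : Type} [CommRing R]
    {X : ModuleCat.{0} R} (P : ProjectiveResolution X) (n : ℕ) (N : ModuleCat.{0} R) :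
    Subsingleton (((Ext R (ModuleCat.{0} R) n).obj (op X)).obj N) ↔
      (P.complex.linearYonedaObj R N).ExactAt n := by
  rw [← ModuleCat.isZero_iff_subsingleton, (P.isoExt n N).isZero_iff,
    HomologicalComplex.exactAt_iff_isZero_homology]

namespace Ideal

noncomputable section

variable {R : Type} [CommRing R] (J : Ideal R)

def syzygy : ℕ → ModuleCat.{0} R
  | 0 => ModuleCat.of R J
  | n + 1 => ModuleCat.of R
      (LinearMap.ker (Finsupp.linearCombination R (id : syzygy n → syzygy n)))

def syzygyResTerm : ℕ → ModuleCat.{0} R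
  | 0 => ModuleCat.of R R
  | n + 1 => ModuleCat.of R (syzygy J n →₀ R)

def syzygyCover (n : ℕ) : syzygyResTerm J (n + 1) →ₗ[R] syzygy J n :=
  Finsupp.linearCombination R id

def syzygyIncl : (n : ℕ) → syzygy J n →ₗ[R] syzygyResTerm J n
  | 0 => J.subtype
  | n + 1 => (LinearMap.ker (Finsupp.linearCombination R (id : syzygy J n → syzygy J n))).subtype

def syzygyResDiff (n : ℕ) : syzygyResTerm J (n + 1) ⟶ syzygyResTerm J n :=
  ModuleCat.ofHom (syzygyIncl J n ∘ₗ syzygyCover J n)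

lemma syzygyCover_syzygyIncl (n : ℕ) (y : syzygy J (n + 1)) :
    syzygyCover J n (syzygyIncl J (n + 1) y) = 0 :=
  y.2

lemma syzygyCover_surjective (n : ℕ) : Function.Surjective (syzygyCover J n) :=
  Finsupp.linearCombination_id_surjective R _

lemma syzygyIncl_injective (n : ℕ) : Function.Injective (syzygyIncl J n) := by
  cases n <;> exact Subtype.val_injective

lemma syzygyCover_single (n : ℕ) (x : syzygy J n) :
    syzygyCover J n (Finsupp.single x 1) = x :=
  (Finsupp.linearCombination_single R 1 x).trans (one_smul R x)

lemma syzygyResDiff_comp (n : ℕ) : syzygyResDiff J (n + 1) ≫ syzygyResDiff J n = 0 := by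
  ext z
  exact congrArg (syzygyIncl J n) (syzygyCover_syzygyIncl J n _) |>.trans (map_zero _)

def syzygyComplex : ChainComplex (ModuleCat.{0} R) ℕ :=
  ChainComplex.of (syzygyResTerm J) (syzygyResDiff J) (syzygyResDiff_comp J)

lemma syzygyComplex_d (n : ℕ) : (syzygyComplex J).d (n + 1) n = syzygyResDiff J n :=
  ChainComplex.of_d _ _ n

instance (n : ℕ) : Projective ((syzygyComplex J).X n) := by
  cases n with
  | zero => exact ModuleCat.projective_of_free (Module.Basis.singleton PUnit.{1} R)
  | succ n => exact ModuleCat.projective_of_free Finsupp.basisSingleOne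

lemma syzygyComplex_exactAt_succ (n : ℕ) : (syzygyComplex J).ExactAt (n + 1) := by
  rw [HomologicalComplex.exactAt_iff' _ (n + 2) (n + 1) n (by simp) (by simp),
    ShortComplex.moduleCat_exact_iff]
  intro x hx
  simp only [HomologicalComplex.shortComplexFunctor'_obj_g, syzygyComplex_d] at hx
  have hx' : syzygyCover J n x = 0 :=
    syzygyIncl_injective J n (by rw [map_zero]; exact hx)
  obtain ⟨y, hy⟩ := syzygyCover_surjective J (n + 1) ⟨x, hx'⟩
  refine ⟨y, ?_⟩
  simp only [HomologicalComplex.shortComplexFunctor'_obj_f, syzygyComplex_d]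
  change syzygyIncl J (n + 1) (syzygyCover J (n + 1) y) = x
  rw [hy]
  rfl

lemma syzygyResDiff_comp_mkQ : syzygyResDiff J 0 ≫ ModuleCat.ofHom J.mkQ = 0 := by
  ext z
  exact (Submodule.Quotient.mk_eq_zero J).2 (syzygyCover J 0 z).2

lemma syzygyResDiff_mkQ_exact :
    (ShortComplex.mk _ _ (syzygyResDiff_comp_mkQ J)).Exact := by
  rw [ShortComplex.moduleCat_exact_iff]
  intro x hx
  refine ⟨Finsupp.single (⟨x, (Submodule.Quotient.mk_eq_zero J).1 hx⟩ : J) 1, ?_⟩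
  exact congrArg (syzygyIncl J 0) (syzygyCover_single J 0 _)

def syzygyResolution : ProjectiveResolution (ModuleCat.of R (R ⧸ J)) where
  complex := syzygyComplex J
  π := (ChainComplex.toSingle₀Equiv _ _).symm ⟨ModuleCat.ofHom J.mkQ, by
    rw [syzygyComplex_d]; exact syzygyResDiff_comp_mkQ J⟩
  quasiIso := ⟨fun n => by
    cases n with
    | zero =>
      rw [ChainComplex.quasiIsoAt₀_iff, ShortComplex.quasiIso_iff_of_zeros']
      · refine (ShortComplex.exact_and_epi_g_iff_of_iso ?_).2 ⟨syzygyResDiff_mkQ_exact J, ?_⟩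
        · exact ShortComplex.isoMk (Iso.refl _) (Iso.refl _) (Iso.refl _)
            (by simp [syzygyComplex_d]; rfl) (by rfl)
        · exact (ModuleCat.epi_iff_surjective _).2 J.mkQ_surjective
      all_goals rfl
    | succ n =>
      rw [quasiIsoAt_iff_exactAt' _ _ (ChainComplex.exactAt_succ_single_obj _ _)]
      exact syzygyComplex_exactAt_succ J n⟩

variable {M : Type} [AddCommGroup M] [Module R M]

lemma syzygyResTerm_zero_hom_apply (φ : syzygyResTerm J 0 ⟶ ModuleCat.of R M) (r : R) :
    φ r = r • φ (1 : R) :=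
  (congrArg φ (mul_one r).symm).trans (φ.hom.map_smul r (1 : R))

lemma apply_single_of_syzygyResDiff_comp {φ : syzygyResTerm J 0 ⟶ ModuleCat.of R M}
    {ψ : syzygyResTerm J 1 ⟶ ModuleCat.of R M} (h : syzygyResDiff J 0 ≫ φ = ψ) (x : J) :
    ψ (Finsupp.single x 1) = (x : R) • φ (1 : R) := by
  subst h
  rw [← syzygyResTerm_zero_hom_apply]
  exact congrArg φ (congrArg (syzygyIncl J 0) (syzygyCover_single J 0 x))

lemma subsingleton_ext_zero_quotient (hM : ∀ m : M, (∀ x ∈ J, x • m = 0) → m = 0) :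
    Subsingleton (((Ext R (ModuleCat.{0} R) 0).obj (op (ModuleCat.of R (R ⧸ J)))).obj
      (ModuleCat.of R M)) := by
  rw [(syzygyResolution J).subsingleton_ext_iff_exactAt,
    HomologicalComplex.exactAt_iff' _ 0 0 1 (by simp) (by simp), ShortComplex.moduleCat_exact_iff]
  intro (φ : syzygyResTerm J 0 ⟶ ModuleCat.of R M) hφ
  change (syzygyComplex J).d 1 0 ≫ φ = 0 at hφ
  rw [syzygyComplex_d] at hφ
  have h1 : φ (1 : R) = 0 := hM _ fun x hx => by
    rw [← apply_single_of_syzygyResDiff_comp J hφ ⟨x, hx⟩]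
    rfl
  have hφ0 (r : R) : φ r = 0 := by rw [syzygyResTerm_zero_hom_apply, h1, smul_zero]
  refine ⟨0, ?_⟩
  change 0 = φ
  exact ModuleCat.hom_ext (LinearMap.ext fun r => (hφ0 r).symm)

lemma nontrivial_ext_one_quotient (Φ : J →ₗ[R] M) (hΦ : ∀ m : M, ∃ x : J, Φ x ≠ (x : R) • m) :
    Nontrivial (((Ext R (ModuleCat.{0} R) 1).obj (op (ModuleCat.of R (R ⧸ J)))).obj
      (ModuleCat.of R M)) := by
  rw [← not_subsingleton_iff_nontrivial, (syzygyResolution J).subsingleton_ext_iff_exactAt,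
    HomologicalComplex.exactAt_iff' _ 0 1 2 (by simp) (by simp), ShortComplex.moduleCat_exact_iff]
  intro hexact
  let ψ : syzygyResTerm J 1 ⟶ ModuleCat.of R M := ModuleCat.ofHom (Φ ∘ₗ syzygyCover J 0)
  have hψ : syzygyResDiff J 1 ≫ ψ = 0 := by
    ext z
    exact congrArg Φ (syzygyCover_syzygyIncl J 0 _) |>.trans (map_zero Φ)
  obtain ⟨(φ : syzygyResTerm J 0 ⟶ ModuleCat.of R M), hφ⟩ := hexact ψ (by
    change (syzygyComplex J).d 2 1 ≫ ψ = 0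
    rwa [syzygyComplex_d])
  change (syzygyComplex J).d 1 0 ≫ φ = ψ at hφ
  rw [syzygyComplex_d] at hφ
  obtain ⟨x, hx⟩ := hΦ (φ (1 : R))
  exact hx ((congrArg Φ (syzygyCover_single J 0 x)).symm.trans
    (apply_single_of_syzygyResDiff_comp J hφ x))

end

end Ideal

section EdgeIdeal

variable (K : Type) [Field K] {V : Type} (G : SimpleGraph V)

lemma X_mul_X_mem_edgeIdeal {u v : V} (h : G.Adj u v) :
    (X u * X v : MvPolynomial V K) ∈ edgeIdeal K G :=
  Ideal.subset_span ⟨u, v, h, rfl⟩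

lemma mem_edgeIdeal_iff {q : MvPolynomial V K} :
    q ∈ edgeIdeal K G ↔ ∀ m ∈ q.support, ∃ u v, G.Adj u v ∧
      Finsupp.single u 1 + Finsupp.single v 1 ≤ m := by
  have hgen : {m | ∃ u v, G.Adj u v ∧ m = (X u * X v : MvPolynomial V K)} =
      (monomial · (1 : K)) ''
        {s | ∃ u v, G.Adj u v ∧ s = Finsupp.single u 1 + Finsupp.single v 1} := by
    ext m
    simp [X, monomial_mul, eq_comm]
  rw [edgeIdeal, hgen, mem_ideal_span_monomial_image]
  simp

lemma coeff_zero_eq_zero_of_X_mul_mem_edgeIdeal {q : MvPolynomial V K} {a : V}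
    (h : X a * q ∈ edgeIdeal K G) : coeff 0 q = 0 := by
  by_contra hq
  have hmem : Finsupp.single a 1 ∈ (X a * q).support := by
    rw [support_X_mul]
    exact Finset.mem_map.2 ⟨0, mem_support_iff.2 hq, add_zero _⟩
  obtain ⟨u, v, -, hle⟩ := (mem_edgeIdeal_iff K G).1 h _ hmem
  have := Finsupp.degree_mono hle
  simp [Finsupp.degree_single] at this

lemma single_add_single_le_of_le_single_add {u u' v : V} {m : V →₀ ℕ} (huu' : u ≠ u')
    (hv : m v ≠ 0) (hle : Finsupp.single u 1 + Finsupp.single u' 1 ≤ Finsupp.single v 1 + m) :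
    Finsupp.single u 1 + Finsupp.single u' 1 ≤ m := by
  classical
  intro x
  have := hle x
  simp only [Finsupp.add_apply, Finsupp.single_apply] at this ⊢
  split_ifs at this ⊢ <;> subst_vars <;> first | omega | exact absurd rfl huu'

lemma mem_edgeIdeal_of_forall_X_mul_mem [Nonempty V] {q : MvPolynomial V K}
    (h : ∀ v, X v * q ∈ edgeIdeal K G) : q ∈ edgeIdeal K G := by
  rw [mem_edgeIdeal_iff]
  intro m hm
  have hm0 : m ≠ 0 := by
    rintro rfl
    exact mem_support_iff.1 hm
      (coeff_zero_eq_zero_of_X_mul_mem_edgeIdeal K G (h (Classical.arbitrary V)))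
  obtain ⟨v, hv⟩ := Finsupp.ne_iff.1 hm0
  have hmem : Finsupp.single v 1 + m ∈ (X v * q).support := by
    rw [support_X_mul]
    exact Finset.mem_map.2 ⟨m, hm, rfl⟩
  obtain ⟨u, u', huu', hle⟩ := (mem_edgeIdeal_iff K G).1 (h v) _ hmem
  exact ⟨u, u', huu', single_add_single_le_of_le_single_add huu'.ne hv hle⟩

end EdgeIdeal

lemma eq_zero_of_forall_varIdeal_smul_eq_zero (K : Type) [Field K] {V : Type} [Nonempty V]
    (G : SimpleGraph V) (m : MvPolynomial V K ⧸ edgeIdeal K G)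
    (hm : ∀ x ∈ varIdeal K (Set.univ : Set V), x • m = 0) : m = 0 := by
  obtain ⟨q, rfl⟩ := Ideal.Quotient.mk_surjective m
  refine Ideal.Quotient.eq_zero_iff_mem.2 (mem_edgeIdeal_of_forall_X_mul_mem K G fun v => ?_)
  rw [← Ideal.Quotient.eq_zero_iff_mem, map_mul]
  exact hm _ (Ideal.subset_span ⟨v, Set.mem_univ v, rfl⟩)

noncomputable section UniversalVertex

variable (K : Type) [Field K] {V : Type} [DecidableEq V] {G : SimpleGraph V} {w : V}

def keepOnlyVar (w : V) : MvPolynomial V K →ₐ[K] MvPolynomial V K :=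
  aeval fun v => if v = w then X v else 0

lemma keepOnlyVar_X (v : V) : keepOnlyVar K w (X v) = if v = w then X v else 0 :=
  aeval_X _ v

lemma sub_keepOnlyVar_mul_X_mem (hw : ∀ v ≠ w, G.Adj w v) (s : MvPolynomial V K) :
    (s - keepOnlyVar K w s) * X w ∈ edgeIdeal K G := by
  induction s using MvPolynomial.induction_on with
  | C a => simp [keepOnlyVar]
  | add p q hp hq =>
    rw [map_add, add_sub_add_comm, add_mul]
    exact add_mem hp hq
  | mul_X p v hp =>
    rw [map_mul, keepOnlyVar_X]
    split_ifs with hv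
    · subst hv
      rw [← sub_mul, mul_right_comm]
      exact Ideal.mul_mem_right _ _ hp
    · rw [mul_zero, sub_zero, show p * X v * X w = X w * X v * p by ring]
      exact Ideal.mul_mem_right _ _ (X_mul_X_mem_edgeIdeal K G (hw v hv))

lemma keepOnlyVar_mem_span_X {q : MvPolynomial V K}
    (hq : q ∈ varIdeal K (Set.univ : Set V)) :
    keepOnlyVar K w q ∈ Ideal.span {X w} := by
  refine Submodule.span_induction ?_ ?_ ?_ ?_ hq
  · rintro _ ⟨v, -, rfl⟩
    rw [keepOnlyVar_X]
    split_ifs with hv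
    · exact hv ▸ Ideal.mem_span_singleton_self _
    · exact zero_mem _
  · simp
  · intro x y _ _ hx hy
    rw [map_add]
    exact add_mem hx hy
  · intro a x _ hx
    rw [smul_eq_mul, map_mul]
    exact Ideal.mul_mem_left _ _ hx

/-- `S`-linear because `(c - keepOnlyVar c) x_w ∈ I_G` (as `w` is adjacent to every other
vertex) and `keepOnlyVar f ∈ (x_w)` for `f ∈ 𝔪`. -/
def universalVertexCocycle (hw : ∀ v ≠ w, G.Adj w v) :
    varIdeal K (Set.univ : Set V) →ₗ[MvPolynomial V K] MvPolynomial V K ⧸ edgeIdeal K G where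
  toFun x := Ideal.Quotient.mk _ (keepOnlyVar K w x)
  map_add' x y := by simp
  map_smul' c x := by
    change Ideal.Quotient.mk _ (keepOnlyVar K w (c * x)) =
      Ideal.Quotient.mk _ (c * keepOnlyVar K w x)
    obtain ⟨a, ha⟩ := Ideal.mem_span_singleton'.1 (keepOnlyVar_mem_span_X K (w := w) x.2)
    rw [Ideal.Quotient.eq, map_mul, ← ha,
      show keepOnlyVar K w c * (a * X w) - c * (a * X w) = -((c - keepOnlyVar K w c) * X w * a) by
        ring]
    exact neg_mem (Ideal.mul_mem_right _ _ (sub_keepOnlyVar_mul_X_mem K hw c))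

lemma exists_universalVertexCocycle_ne_smul [Nontrivial V] (hw : ∀ v ≠ w, G.Adj w v)
    (m : MvPolynomial V K ⧸ edgeIdeal K G) :
    ∃ x : varIdeal K (Set.univ : Set V),
      universalVertexCocycle K hw x ≠ (x : MvPolynomial V K) • m := by
  obtain ⟨u, rfl⟩ := Ideal.Quotient.mk_surjective m
  obtain ⟨b, hb⟩ := exists_ne w
  by_contra! h
  have hw' := h ⟨X w, Ideal.subset_span ⟨w, trivial, rfl⟩⟩
  have hb' := h ⟨X b, Ideal.subset_span ⟨b, trivial, rfl⟩⟩
  change Ideal.Quotient.mk _ (keepOnlyVar K w (X w)) = Ideal.Quotient.mk _ (X w * u) at hw'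
  change Ideal.Quotient.mk _ (keepOnlyVar K w (X b)) = Ideal.Quotient.mk _ (X b * u) at hb'
  rw [keepOnlyVar_X, if_pos rfl, Ideal.Quotient.eq, ← mul_one_sub] at hw'
  rw [keepOnlyVar_X, if_neg hb, map_zero, eq_comm, Ideal.Quotient.eq_zero_iff_mem] at hb'
  have h1 := coeff_zero_eq_zero_of_X_mul_mem_edgeIdeal K G hw'
  rw [coeff_sub, coeff_zero_eq_zero_of_X_mul_mem_edgeIdeal K G hb', sub_zero, coeff_zero_one] at h1
  exact one_ne_zero h1

end UniversalVertex

theorem depthQ_edgeIdeal_eq_one_of_forall_adj (K : Type) [Field K] {V : Type} [Nontrivial V]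
    {G : SimpleGraph V} {w : V} (hw : ∀ v ≠ w, G.Adj w v) :
    depthQ K (edgeIdeal K G) = 1 := by
  classical
  have h0 := Ideal.subsingleton_ext_zero_quotient (varIdeal K Set.univ)
    (eq_zero_of_forall_varIdeal_smul_eq_zero K G)
  have h1 := Ideal.nontrivial_ext_one_quotient (varIdeal K Set.univ)
    (universalVertexCocycle K hw) (exists_universalVertexCocycle_ne_smul K hw)
  rw [depthQ, Nat.sInf_def ⟨1, h1⟩, Nat.find_eq_iff]
  refine ⟨h1, fun i hi => ?_⟩
  obtain rfl : i = 0 := by omega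
  exact not_nontrivial_iff_subsingleton.2 h0

namespace FanData

lemma h_pos {n k : ℕ} (D : FanData n k) (i : Fin k) (j : Fin (D.r i)) : 0 < D.h i j := by
  have := D.agt i j
  unfold h
  omega

lemma nontrivial_fanVert {n k : ℕ} (D : FanData n k) (i : Fin k) : Nontrivial (FanVert D) :=
  ⟨Sum.inl (D.w i ⟨0, D.rpos i⟩), Sum.inr ⟨i, ⟨0, D.rpos i⟩, ⟨0, D.h_pos i _⟩⟩, Sum.inl_ne_inr⟩

/-- The vertex `u₁`, which lies in `K_n` and in every clique of the fan. -/
def apex {n : ℕ} (D : FanData n 1) : FanVert D := Sum.inl (D.w 0 ⟨0, D.rpos 0⟩)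

lemma fanGraph_adj_apex {n : ℕ} (D : FanData n 1) (v : FanVert D) (hv : v ≠ D.apex) :
    (fanGraph D).Adj D.apex v := by
  refine ⟨hv.symm, ?_⟩
  rcases v with x | ⟨i, j, m⟩
  · exact Or.inl ⟨_, x, rfl, rfl⟩
  · obtain rfl : i = 0 := Subsingleton.elim _ _
    exact Or.inr ⟨0, j, Or.inl ⟨⟨0, D.rpos 0⟩, Nat.zero_le _, rfl⟩, Or.inr ⟨m, rfl⟩⟩

end FanData

theorem stmt9_general {n : ℕ} (K : Type) [Field K] (D : FanData n 1) :
    depthQ K (edgeIdeal K (fanGraph D)) = 1 :=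
  have := D.nontrivial_fanVert 0
  depthQ_edgeIdeal_eq_one_of_forall_adj K D.fanGraph_adj_apex

/-- for a 1-fan graph, `depth(S/I_G) = 1`. -/
theorem stmt9 {n : ℕ} (K : Type) [Field K] (hn : 2 ≤ n) (D : FanData n 1) :
    depthQ K (edgeIdeal K (fanGraph D)) = 1 :=
  stmt9_general K D
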